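/- Shifting lemma invariance: for any leaf x ∈ [n] and any t ∈ ℝ, if d' is obtained from d by adding t to every distance d_{xy} for y ≠ x, then the Q-criterion vectors satisfy q'_{uv} − q_{uv} = −t for all pairs {u,v}; hence the differences q_{uv} − q_{u'v'} between any two Q-criterion entries are unchanged, and NJ picks the same minimal pair. -/

import Mathlib

/-! The Q-criterion is linear in the dissimilarity map, and adding `t` to every distance at the
leaf `x` is adding the star metric `leafShift x t`. Every row sum of that star metric is `t`
except the one at `x`, which is `(n - 1) t`; so its Q-criterion is `-2t` at every off-diagonal
pair, whether or not the pair contains `x`. -/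

open Finset

section QCriterion

variable {ι : Type*} [Fintype ι]

noncomputable def qCriterion (d : ι → ι → ℝ) (u v : ι) : ℝ :=
  ((Fintype.card ι : ℝ) - 2) * d u v - ∑ z, d u z - ∑ z, d z v

lemma qCriterion_add (d e : ι → ι → ℝ) :
    qCriterion (d + e) = qCriterion d + qCriterion e := by
  ext u v
  simp only [qCriterion, Pi.add_apply, sum_add_distrib]
  ring

end QCriterion

section LeafShift

variable {ι : Type*} [DecidableEq ι]

def leafShift (x : ι) (t : ℝ) (u v : ι) : ℝ :=
  if u ≠ v ∧ (x = u ∨ x = v) then t else 0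

lemma leafShift_comm (x : ι) (t : ℝ) (u v : ι) : leafShift x t u v = leafShift x t v u := by
  simp only [leafShift, ne_comm, or_comm]

variable [Fintype ι]

lemma sum_leafShift (x : ι) (t : ℝ) (u : ι) :
    ∑ z, leafShift x t u z = if x = u then ((Fintype.card ι : ℝ) - 1) * t else t := by
  split_ifs with hxu
  · subst hxu
    have : ∀ z, leafShift x t x z = if z = x then 0 else t := fun z => by
      by_cases hz : z = x
      · simp [leafShift, hz]
      · simp [leafShift, hz, Ne.symm hz]
    rw [sum_congr rfl fun z _ => this z, sum_ite, sum_const_zero, zero_add, sum_const,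
      nsmul_eq_mul, filter_ne', card_erase_of_mem (mem_univ x), card_univ,
      Nat.cast_pred (Fintype.card_pos_iff.2 ⟨x⟩)]
  · have : ∀ z, leafShift x t u z = if x = z then t else 0 := fun z => by
      by_cases hz : x = z
      · subst hz; simp [leafShift, Ne.symm hxu]
      · simp [leafShift, hxu, hz]
    simp only [this, sum_ite_eq, mem_univ, if_true]

lemma qCriterion_leafShift (x : ι) (t : ℝ) {u v : ι} (huv : u ≠ v) :
    qCriterion (leafShift x t) u v = -(2 * t) := by
  have hcol : ∑ z, leafShift x t z v = ∑ z, leafShift x t v z :=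
    sum_congr rfl fun z _ => leafShift_comm x t z v
  rw [qCriterion, hcol, sum_leafShift, sum_leafShift]
  by_cases hxu : x = u
  · subst hxu
    simp only [leafShift, ne_eq, huv, not_false_eq_true, or_false, and_self, ↓reduceIte]
    ring
  · by_cases hxv : x = v
    · subst hxv
      simp only [leafShift, ne_eq, huv, not_false_eq_true, hxu, or_true, and_self, ↓reduceIte]
      ring
    · simp only [leafShift, hxu, hxv, or_self, and_false, ↓reduceIte]
      ring

end LeafShift

theorem nj_shifting_lemma_general
    (n : ℕ) (x : Fin n) (t : ℝ)
    (d d' : Fin n → Fin n → ℝ)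
    (hdiag : ∀ u, d u u = 0)
    (hdiag' : ∀ u, d' u u = 0)
    (hshift : ∀ u v, u ≠ v → d' u v = d u v + (if x = u ∨ x = v then t else 0))
    (q q' : Fin n → Fin n → ℝ)
    (hq : ∀ u v, q u v = ((n : ℝ) - 2) * d u v - (∑ z, d u z) - ∑ z, d z v)
    (hq' : ∀ u v, q' u v = ((n : ℝ) - 2) * d' u v - (∑ z, d' u z) - ∑ z, d' z v) :
    (∀ u v, u ≠ v → q' u v - q u v = -(2 * t)) ∧
    (∀ u v u' v', u ≠ v → u' ≠ v' → q' u v - q' u' v' = q u v - q u' v') ∧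
    (∀ u v, u ≠ v →
      ((∀ u' v', u' ≠ v' → q u v ≤ q u' v') ↔ (∀ u' v', u' ≠ v' → q' u v ≤ q' u' v'))) := by
  have hd' : d' = d + leafShift x t := by
    ext u v
    by_cases huv : u = v
    · subst huv; simp [leafShift, hdiag, hdiag']
    · simp [leafShift, hshift u v huv, huv]
  have hqd : q = qCriterion d := by ext u v; simp [hq, qCriterion]
  have hqd' : q' = qCriterion d' := by ext u v; simp [hq', qCriterion]
  have hconst : ∀ u v, u ≠ v → q' u v - q u v = -(2 * t) := fun u v huv => by
    simp [hqd, hqd', hd', qCriterion_add, qCriterion_leafShift x t huv]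
  refine ⟨hconst, fun u v u' v' huv hu'v' => ?_, fun u v huv => ?_⟩
  · linarith [hconst u v huv, hconst u' v' hu'v']
  · refine forall₂_congr fun u' v' => imp_congr_right fun hu'v' => ?_
    constructor <;> intro <;> linarith [hconst u v huv, hconst u' v' hu'v']

/-- Shifting lemma invariance: if `d'` is obtained from a dissimilarity map `d`
on `[n]` by adding `t` to every distance `d_{xy}` with `y ≠ x` (for a fixed
leaf `x`), then every entry of the Q-criterion shifts by the same constant
(`-2t`); hence all differences of Q-criterion entries are unchanged and NJ
picks the same minimal pair. -/
theorem nj_shifting_lemma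
    (n : ℕ) (hn : 4 ≤ n) (x : Fin n) (t : ℝ)
    (d d' : Fin n → Fin n → ℝ)
    (hsymm : ∀ u v, d u v = d v u) (hdiag : ∀ u, d u u = 0)
    (hsymm' : ∀ u v, d' u v = d' v u) (hdiag' : ∀ u, d' u u = 0)
    (hshift : ∀ u v, u ≠ v → d' u v = d u v + (if x = u ∨ x = v then t else 0))
    (q q' : Fin n → Fin n → ℝ)
    (hq : ∀ u v, q u v = ((n : ℝ) - 2) * d u v - (∑ z, d u z) - ∑ z, d z v)
    (hq' : ∀ u v, q' u v = ((n : ℝ) - 2) * d' u v - (∑ z, d' u z) - ∑ z, d' z v) :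
    (∀ u v, u ≠ v → q' u v - q u v = -(2 * t)) ∧
    (∀ u v u' v', u ≠ v → u' ≠ v' → q' u v - q' u' v' = q u v - q u' v') ∧
    (∀ u v, u ≠ v →
      ((∀ u' v', u' ≠ v' → q u v ≤ q u' v') ↔ (∀ u' v', u' ≠ v' → q' u v ≤ q' u' v'))) :=
  nj_shifting_lemma_general n x t d d' hdiag hdiag' hshift q q' hq hq'
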